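/- arXiv:2409.02471 — 5 statements merged into one kernel-verified Lean document; each statement's English description precedes it below -/
import Mathlib

section
/- Let μ₁, μ₂ be probability measures on 𝒳 with scaled Jordan decomposition μ₊, μ₋ of μ₁−μ₂. A measurable function f : 𝒳 → ℝ satisfies f♯μ₁ = f♯μ₂ if and only if f♯μ₊ = f♯μ₋. -/
/-!
Writing `s = μ₁ − μ₂ = s⁺ − s⁻` for the Jordan decomposition, we get the identity of finite
measures `μ₁ + s⁻ = μ₂ + s⁺`, which survives pushforward by `f`. Finite measures cancel
additively, so `f♯μ₁ = f♯μ₂` iff `f♯s⁺ = f♯s⁻`; and evaluating the identity on the whole space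
shows that `s⁺` and `s⁻` have the same mass, so normalizing both does not affect that equality.
-/

open MeasureTheory Set

namespace MeasureTheory.Measure

variable {α β : Type*} [MeasurableSpace α] [MeasurableSpace β]

theorem eq_iff_eq_of_add_eq {μ ν μ' ν' : Measure α} [IsFiniteMeasure μ] [IsFiniteMeasure ν]
    [IsFiniteMeasure μ'] [IsFiniteMeasure ν'] (h : μ + ν = μ' + ν') : μ = μ' ↔ ν' = ν := by
  rw [← toSignedMeasure_eq_toSignedMeasure_iff, ← toSignedMeasure_eq_toSignedMeasure_iff]
  have hs := toSignedMeasure_congr h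
  rw [toSignedMeasure_add, toSignedMeasure_add] at hs
  constructor
  · rintro hμ
    rw [hμ] at hs
    exact (add_left_cancel hs).symm
  · rintro hν
    rw [← hν] at hs
    exact add_right_cancel hs

theorem add_toJordanDecomposition_negPart_eq (μ ν : Measure α) [IsFiniteMeasure μ]
    [IsFiniteMeasure ν] :
    μ + (μ.toSignedMeasure - ν.toSignedMeasure).toJordanDecomposition.negPart =
      ν + (μ.toSignedMeasure - ν.toSignedMeasure).toJordanDecomposition.posPart := by
  rw [← toSignedMeasure_eq_toSignedMeasure_iff, toSignedMeasure_add, toSignedMeasure_add,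
    add_comm ν.toSignedMeasure, ← sub_eq_sub_iff_add_eq_add]
  exact (μ.toSignedMeasure - ν.toSignedMeasure).toSignedMeasure_toJordanDecomposition.symm

theorem map_smul_inv_measure_univ_eq_iff {μ ν : Measure α} [IsFiniteMeasure μ]
    (hμν : μ univ = ν univ) {f : α → β} :
    ((μ univ)⁻¹ • μ).map f = ((ν univ)⁻¹ • ν).map f ↔ μ.map f = ν.map f := by
  rw [Measure.map_smul, Measure.map_smul, ← hμν]
  rcases eq_or_ne (μ univ) 0 with h0 | h0
  · have hν : ν = 0 := measure_univ_eq_zero.mp (hμν ▸ h0)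
    simp only [measure_univ_eq_zero.mp h0, hν]
  · exact IsUnit.smul_left_cancel
      (ENNReal.isUnit_iff.mpr ⟨ENNReal.inv_ne_zero.mpr (measure_ne_top μ univ),
        ENNReal.inv_ne_top.mpr h0⟩)

end MeasureTheory.Measure

theorem stmt5_general {𝒳 : Type*} [MeasurableSpace 𝒳]
    (μ₁ μ₂ : Measure 𝒳) [IsProbabilityMeasure μ₁] [IsProbabilityMeasure μ₂]
    (νp νm : Measure 𝒳)
    (hνp : νp = (μ₁.toSignedMeasure - μ₂.toSignedMeasure).toJordanDecomposition.posPart)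
    (hνm : νm = (μ₁.toSignedMeasure - μ₂.toSignedMeasure).toJordanDecomposition.negPart)
    (f : 𝒳 → ℝ) (hf : Measurable f) :
    μ₁.map f = μ₂.map f ↔
      ((νp Set.univ)⁻¹ • νp).map f = ((νm Set.univ)⁻¹ • νm).map f := by
  have key : μ₁ + νm = μ₂ + νp := hνp ▸ hνm ▸ Measure.add_toJordanDecomposition_negPart_eq μ₁ μ₂
  have : IsFiniteMeasure νp := hνp ▸ inferInstance
  have : IsFiniteMeasure νm := hνm ▸ inferInstance
  have hmass : νp univ = νm univ := by
    simpa [measure_univ] using (congrArg (· univ) key).symm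
  have key_map : μ₁.map f + νm.map f = μ₂.map f + νp.map f := by
    rw [← Measure.map_add _ _ hf, ← Measure.map_add _ _ hf, key]
  rw [Measure.eq_iff_eq_of_add_eq key_map, Measure.map_smul_inv_measure_univ_eq_iff hmass]

/-- With `μ₊, μ₋` the scaled Jordan decomposition of `μ₁ − μ₂`, a measurable `f : 𝒳 → ℝ`
satisfies `f♯μ₁ = f♯μ₂` if and only if `f♯μ₊ = f♯μ₋`. -/
theorem stmt5 {𝒳 : Type*} [MeasurableSpace 𝒳]
    (μ₁ μ₂ : Measure 𝒳) [IsProbabilityMeasure μ₁] [IsProbabilityMeasure μ₂]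
    (hne : μ₁ ≠ μ₂)
    (νp νm : Measure 𝒳)
    (hνp : νp = (μ₁.toSignedMeasure - μ₂.toSignedMeasure).toJordanDecomposition.posPart)
    (hνm : νm = (μ₁.toSignedMeasure - μ₂.toSignedMeasure).toJordanDecomposition.negPart)
    (f : 𝒳 → ℝ) (hf : Measurable f) :
    μ₁.map f = μ₂.map f ↔
      ((νp Set.univ)⁻¹ • νp).map f = ((νm Set.univ)⁻¹ • νm).map f :=
  stmt5_general μ₁ μ₂ νp νm hνp hνm f hf
end

section
/- Let π be a probability measure on ℝ² whose support is strictly monotone, i.e., for all (y₁,z₁), (y₂,z₂) in supp(π), y₁ < y₂ implies z₁ < z₂. Then π is induced by a measurable map T from its second marginal to its first marginal: π = (T, id)♯ν, where ν is the second marginal of π. -/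
open MeasureTheory

/-- The topological support of a measure on `ℝ × ℝ`. -/
def msupport (π : Measure (ℝ × ℝ)) : Set (ℝ × ℝ) :=
  {p | ∀ U ∈ nhds p, π U ≠ 0}

lemma msupport_compl_null (π : Measure (ℝ × ℝ)) : π (msupport π)ᶜ = 0 := by
  -- the complement is covered by open null sets
  set S : Set (Set (ℝ × ℝ)) := {U | IsOpen U ∧ π U = 0} with hS
  have hcover : (msupport π)ᶜ ⊆ ⋃₀ S := by
    intro p hp
    simp only [msupport, Set.mem_compl_iff, Set.mem_setOf_eq, not_forall] at hp
    obtain ⟨U, hU, hU0⟩ := hp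
    push_neg at hU0
    obtain ⟨V, hVU, hVopen, hpV⟩ := mem_nhds_iff.mp hU
    exact ⟨V, ⟨hVopen, measure_mono_null hVU hU0⟩, hpV⟩
  obtain ⟨T, hTc, hTS, hTeq⟩ := TopologicalSpace.isOpen_sUnion_countable S (fun s hs => hs.1)
  have : π (⋃₀ T) = 0 := by
    apply (measure_sUnion_null_iff hTc).mpr
    intro s hs
    exact (hTS hs).2
  exact measure_mono_null (hTeq ▸ hcover) this

lemma measurable_tan' : Measurable Real.tan := by
  have : Real.tan = fun x => Real.sin x / Real.cos x := by
    funext x; exact Real.tan_eq_sin_div_cos x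
  rw [this]
  exact Real.measurable_sin.div Real.measurable_cos

/-- If a probability measure `π` on `ℝ²` has strictly monotone support
(for all `(y₁,z₁), (y₂,z₂)` in the support, `y₁ < y₂` implies `z₁ < z₂`), then `π` is
induced by a measurable map `T` from its second marginal `ν` to its first marginal `μ'`:
`T♯ν = μ'` and `π` is the law of `(T(Z), Z)` for `Z ∼ ν`. -/
theorem stmt6 (π : Measure (ℝ × ℝ)) [IsProbabilityMeasure π]
    (hmono : ∀ p ∈ msupport π, ∀ q ∈ msupport π, p.1 < q.1 → p.2 < q.2) :
    ∃ T : ℝ → ℝ, Measurable T ∧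
      (π.map Prod.snd).map T = π.map Prod.fst ∧
      π = (π.map Prod.snd).map (fun z => (T z, z)) := by
  classical
  set S := msupport π with hSdef
  -- key order fact
  have hgraph : ∀ p ∈ S, ∀ q ∈ S, q.2 ≤ p.2 → q.1 ≤ p.1 := by
    intro p hp q hq hz
    by_contra h
    push_neg at h
    exact absurd (hmono p hp q hq h) (not_lt.mpr hz)
  -- the bounded monotone selector
  set A : ℝ → Set ℝ := fun z => insert (-2 : ℝ) {w | ∃ p ∈ S, p.2 ≤ z ∧ Real.arctan p.1 = w}
    with hA
  have hAne : ∀ z, (A z).Nonempty := fun z => ⟨-2, Set.mem_insert _ _⟩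
  have hAbdd : ∀ z, BddAbove (A z) := by
    intro z
    refine ⟨2, ?_⟩
    rintro w (rfl | ⟨p, _, _, rfl⟩)
    · norm_num
    · exact le_of_lt (lt_trans (Real.arctan_lt_pi_div_two _) (by
        have := Real.pi_lt_d2; linarith))
  set g : ℝ → ℝ := fun z => sSup (A z) with hg
  have hgmono : Monotone g := by
    intro z₁ z₂ hz
    apply csSup_le_csSup (hAbdd z₂) (hAne z₁)
    rintro w (rfl | ⟨p, hp, hpz, rfl⟩)
    · exact Set.mem_insert _ _
    · exact Set.mem_insert_of_mem _ ⟨p, hp, le_trans hpz hz, rfl⟩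
  set T : ℝ → ℝ := fun z => Real.tan (g z) with hT
  have hTmeas : Measurable T := measurable_tan'.comp hgmono.measurable
  -- on the support, T recovers the first coordinate
  have hTval : ∀ p ∈ S, T p.2 = p.1 := by
    intro p hp
    have hgv : g p.2 = Real.arctan p.1 := by
      apply le_antisymm
      · apply csSup_le (hAne _)
        rintro w (rfl | ⟨q, hq, hqz, rfl⟩)
        · have := Real.neg_pi_div_two_lt_arctan p.1
          have := Real.pi_lt_d2
          linarith
        · exact Real.arctan_strictMono.monotone (hgraph p hp q hq hqz)
      · exact le_csSup (hAbdd _) (Set.mem_insert_of_mem _ ⟨p, hp, le_rfl, rfl⟩)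
    rw [hT]; simp only [hgv, Real.tan_arctan]
  have hae : ∀ᵐ p ∂π, p ∈ S := by
    rw [ae_iff]
    exact msupport_compl_null π
  refine ⟨T, hTmeas, ?_, ?_⟩
  · rw [Measure.map_map hTmeas measurable_snd]
    apply Measure.map_congr
    filter_upwards [hae] with p hp
    exact hTval p hp
  · symm
    rw [Measure.map_map (show Measurable fun z : ℝ => (T z, z) from hTmeas.prodMk measurable_id) measurable_snd]
    have heq : π.map ((fun z => (T z, z)) ∘ Prod.snd) = π.map id := by
      apply Measure.map_congr
      filter_upwards [hae] with p hp
      simp [Function.comp, hTval p hp]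
    rw [heq, Measure.map_id]
end

section
/- Fix d ≠ 0 and h' ∈ ℝ, d' ≠ 0. Define for h ∈ ℝ the function h ↦ h²/|d| − (h−h')²/(|d|+|d'|). This function is convex in h. Consequently, any C-convex function φ(·, d), after addition of h²/|d|, i.e., h ↦ φ(h,d) + h²/|d| = sup over (h',d') of (φ^C(h',d') + h²/|d| − (h−h')²/(|d|+|d'|)), is convex as a supremum of convex functions. -/
open Set

lemma stmt9_aux (d : ℝ) (hd : d ≠ 0) (h' d' : ℝ) (hd' : d' ≠ 0) :
    ConvexOn ℝ Set.univ fun h : ℝ => h ^ 2 / |d| - (h - h') ^ 2 / (|d| + |d'|) := by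
  have hA : (0:ℝ) < |d| := abs_pos.mpr hd
  have hB : (0:ℝ) < |d| + |d'| := by positivity
  refine ⟨convex_univ, fun x _ y _ a b ha hb hab => ?_⟩
  simp only [smul_eq_mul]
  have hb1 : b = 1 - a := by linarith
  subst hb1
  have e1 : a * (x ^ 2 / |d|) + (1 - a) * (y ^ 2 / |d|)
      = (a * x + (1 - a) * y) ^ 2 / |d| + a * (1 - a) * (x - y) ^ 2 / |d| := by
    field_simp; ring
  have e2 : a * ((x - h') ^ 2 / (|d| + |d'|)) + (1 - a) * ((y - h') ^ 2 / (|d| + |d'|))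
      = (a * x + (1 - a) * y - h') ^ 2 / (|d| + |d'|)
        + a * (1 - a) * (x - y) ^ 2 / (|d| + |d'|) := by
    field_simp; ring
  have key : a * (1 - a) * (x - y) ^ 2 / (|d| + |d'|) ≤ a * (1 - a) * (x - y) ^ 2 / |d| :=
    div_le_div_of_nonneg_left (by positivity) hA (le_add_of_nonneg_right (abs_nonneg _))
  nlinarith [e1, e2, key]

/-- For fixed `d ≠ 0`, the function `h ↦ h²/|d| − (h−h')²/(|d|+|d'|)` is convex for any
`h' ∈ ℝ` and `d' ≠ 0`; consequently for a `C`-convex function `φ(·,d)` written as a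
supremum `φ(h,d) + h²/|d| = sup_{(h',d')} (ψ(h',d') + h²/|d| − (h−h')²/(|d|+|d'|))`, the
function `h ↦ φ(h,d) + h²/|d|` is convex as a supremum of convex functions. -/
theorem stmt9 (d : ℝ) (hd : d ≠ 0) (ψ : ℝ × ℝ → ℝ) (φ : ℝ → ℝ)
    (hbdd : ∀ h : ℝ, BddAbove (Set.range fun x' : {p : ℝ × ℝ // p.2 ≠ 0} =>
      ψ x'.1 + h ^ 2 / |d| - (h - x'.1.1) ^ 2 / (|d| + |x'.1.2|)))
    (hφ : ∀ h : ℝ, φ h + h ^ 2 / |d| = ⨆ x' : {p : ℝ × ℝ // p.2 ≠ 0},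
      (ψ x'.1 + h ^ 2 / |d| - (h - x'.1.1) ^ 2 / (|d| + |x'.1.2|))) :
    (∀ h' d' : ℝ, d' ≠ 0 →
        ConvexOn ℝ Set.univ fun h : ℝ => h ^ 2 / |d| - (h - h') ^ 2 / (|d| + |d'|)) ∧
      ConvexOn ℝ Set.univ fun h : ℝ => φ h + h ^ 2 / |d| := by
  refine ⟨fun h' d' hd' => stmt9_aux d hd h' d' hd', ?_⟩
  haveI : Nonempty {p : ℝ × ℝ // p.2 ≠ 0} := ⟨⟨(0, 1), one_ne_zero⟩⟩
  refine ⟨convex_univ, fun x _ y _ a b ha hb hab => ?_⟩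
  simp only [smul_eq_mul]
  rw [hφ]
  refine ciSup_le fun x' => ?_
  have hcvx := (stmt9_aux d hd x'.1.1 x'.1.2 x'.2).2 (mem_univ x) (mem_univ y) ha hb hab
  simp only [smul_eq_mul] at hcvx
  have hx : ψ x'.1 + x ^ 2 / |d| - (x - x'.1.1) ^ 2 / (|d| + |x'.1.2|) ≤ φ x + x ^ 2 / |d| := by
    rw [hφ]; exact le_ciSup (hbdd x) x'
  have hy : ψ x'.1 + y ^ 2 / |d| - (y - x'.1.1) ^ 2 / (|d| + |x'.1.2|) ≤ φ y + y ^ 2 / |d| := by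
    rw [hφ]; exact le_ciSup (hbdd y) x'
  have hψ : a * ψ x'.1 + b * ψ x'.1 = ψ x'.1 := by rw [← add_mul, hab, one_mul]
  nlinarith [hcvx, mul_le_mul_of_nonneg_left hx ha, mul_le_mul_of_nonneg_left hy hb, hψ]
end

section
/- Suppose there exist measurable maps f₊ and f₋ with f₊♯𝛍₊ = f₋♯𝛍₋ = ν* realizing the optimal transport costs OT_c(𝛍₊, ν*) and OT_c(𝛍₋, ν*) respectively, and suppose ν* minimizes ν ↦ OT_c(𝛍₊,ν) + OT_c(𝛍₋,ν). Then the value of this minimum equals the optimal transport cost OT_C(𝛍₊, 𝛍₋) where C(x₁,x₂) = min_y (c(x₁,y) + c(x₂,y)). -/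
open MeasureTheory
open scoped ENNReal

/-- The Kantorovich optimal transport cost between `μ` and `ν` for the cost `c`. -/
noncomputable def OTcost {α β : Type*} [MeasurableSpace α] [MeasurableSpace β]
    (c : α → β → ℝ) (μ : Measure α) (ν : Measure β) : ℝ≥0∞ :=
  ⨅ π ∈ {π : Measure (α × β) | π.map Prod.fst = μ ∧ π.map Prod.snd = ν},
    ∫⁻ p, ENNReal.ofReal (c p.1 p.2) ∂π

open ProbabilityTheory


lemma aux_le (h₁ d₁ h₂ d₂ y : ℝ) (hd₁ : d₁ ≠ 0) (hd₂ : d₂ ≠ 0) :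
    (h₁ - h₂) ^ 2 / (|d₁| + |d₂|) ≤ (h₁ - y) ^ 2 / |d₁| + (h₂ - y) ^ 2 / |d₂| := by
  have ha : 0 < |d₁| := abs_pos.2 hd₁
  have hb : 0 < |d₂| := abs_pos.2 hd₂
  rw [div_add_div _ _ (ne_of_gt ha) (ne_of_gt hb), div_le_div_iff₀ (by positivity) (by positivity)]
  nlinarith [sq_nonneg (|d₂| * (h₁ - y) + |d₁| * (h₂ - y)), mul_pos ha hb, ha.le, hb.le]

lemma aux_eq (h₁ d₁ h₂ d₂ : ℝ) (hd₁ : d₁ ≠ 0) (hd₂ : d₂ ≠ 0) :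
    (h₁ - (|d₂| * h₁ + |d₁| * h₂) / (|d₁| + |d₂|)) ^ 2 / |d₁|
      + (h₂ - (|d₂| * h₁ + |d₁| * h₂) / (|d₁| + |d₂|)) ^ 2 / |d₂|
      = (h₁ - h₂) ^ 2 / (|d₁| + |d₂|) := by
  have ha : 0 < |d₁| := abs_pos.2 hd₁
  have hb : 0 < |d₂| := abs_pos.2 hd₂
  have hab : (0:ℝ) < |d₁| + |d₂| := by positivity
  field_simp
  ring

noncomputable def Tmid (q : (ℝ × ℝ) × (ℝ × ℝ)) : ℝ :=
  (|q.2.2| * q.1.1 + |q.1.2| * q.2.1) / (|q.1.2| + |q.2.2|)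

lemma Tmid_meas : Measurable Tmid := by unfold Tmid; fun_prop

/-- If optimal transport maps `f₊, f₋` push `𝛍₊, 𝛍₋` to a common `ν*` realizing the costs
`OT_c(𝛍₊,ν*)`, `OT_c(𝛍₋,ν*)`, and `ν*` minimizes `ν ↦ OT_c(𝛍₊,ν) + OT_c(𝛍₋,ν)`, then
the minimum value equals `OT_C(𝛍₊,𝛍₋)` where `C(x₁,x₂) = min_y (c(x₁,y)+c(x₂,y))`
is given by `C((h₁,d₁),(h₂,d₂)) = (h₁−h₂)²/(|d₁|+|d₂|)`. -/
theorem stmt14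
    (c : ℝ × ℝ → ℝ → ℝ) (hc : ∀ x y, c x y = (x.1 - y) ^ 2 / |x.2|)
    (C : ℝ × ℝ → ℝ × ℝ → ℝ)
    (hC : ∀ x₁ x₂, C x₁ x₂ = (x₁.1 - x₂.1) ^ 2 / (|x₁.2| + |x₂.2|))
    (μp μm : Measure (ℝ × ℝ)) [IsProbabilityMeasure μp] [IsProbabilityMeasure μm]
    (hμp : μp {p : ℝ × ℝ | p.2 = 0} = 0) (hμm : μm {p : ℝ × ℝ | p.2 = 0} = 0)
    (νstar : Measure ℝ) [IsProbabilityMeasure νstar]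
    (fp fm : ℝ × ℝ → ℝ) (hfp : Measurable fp) (hfm : Measurable fm)
    (hfpmap : μp.map fp = νstar) (hfmmap : μm.map fm = νstar)
    (hfpopt : ∫⁻ x, ENNReal.ofReal (c x (fp x)) ∂μp = OTcost c μp νstar)
    (hfmopt : ∫⁻ x, ENNReal.ofReal (c x (fm x)) ∂μm = OTcost c μm νstar)
    (hmin : ∀ ν : Measure ℝ, IsProbabilityMeasure ν →
      OTcost c μp νstar + OTcost c μm νstar ≤ OTcost c μp ν + OTcost c μm ν) :
    OTcost c μp νstar + OTcost c μm νstar = OTcost C μp μm := by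
  have hc0 : ∀ x y, 0 ≤ c x y := fun x y => by rw [hc]; positivity
  have hC0 : ∀ x₁ x₂, 0 ≤ C x₁ x₂ := fun x₁ x₂ => by rw [hC]; positivity
  have hcM : Measurable fun p : (ℝ × ℝ) × ℝ => ENNReal.ofReal (c p.1 p.2) := by
    simp only [hc]; fun_prop
  have hcM' : Measurable fun p : ℝ × (ℝ × ℝ) => ENNReal.ofReal (c p.2 p.1) := by
    simp only [hc]; fun_prop
  have hCM : Measurable fun p : (ℝ × ℝ) × (ℝ × ℝ) => ENNReal.ofReal (C p.1 p.2) := by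
    simp only [hC]; fun_prop
  have hset0 : MeasurableSet {x : ℝ × ℝ | x.2 = 0} :=
    measurable_snd (measurableSet_singleton 0)
  refine le_antisymm ?_ ?_
  · -- sum ≤ OTcost C μp μm : direction 2
    rw [OTcost]
    refine le_iInf₂ fun π hπ => ?_
    obtain ⟨hπ1, hπ2⟩ := hπ
    haveI : IsProbabilityMeasure π := ⟨by
      have h := congrArg (fun m : Measure (ℝ × ℝ) => m Set.univ) hπ1
      rw [Measure.map_apply measurable_fst MeasurableSet.univ, Set.preimage_univ] at h
      rw [h]; exact measure_univ⟩
    set ν : Measure ℝ := π.map Tmid with hν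
    haveI : IsProbabilityMeasure ν := Measure.isProbabilityMeasure_map Tmid_meas.aemeasurable
    have hgp : Measurable fun q : (ℝ × ℝ) × (ℝ × ℝ) => (q.1, Tmid q) :=
      measurable_fst.prodMk Tmid_meas
    have hgm : Measurable fun q : (ℝ × ℝ) × (ℝ × ℝ) => (q.2, Tmid q) :=
      measurable_snd.prodMk Tmid_meas
    have h1 : OTcost c μp ν ≤ ∫⁻ q, ENNReal.ofReal (c q.1 (Tmid q)) ∂π := by
      rw [OTcost]
      refine le_trans (iInf₂_le (π.map fun q => (q.1, Tmid q)) ⟨?ma, ?mb⟩) ?mc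
      case ma => rw [Measure.map_map measurable_fst hgp]; exact hπ1
      case mb => rw [Measure.map_map measurable_snd hgp]; rfl
      case mc => rw [lintegral_map hcM hgp]
    have h2 : OTcost c μm ν ≤ ∫⁻ q, ENNReal.ofReal (c q.2 (Tmid q)) ∂π := by
      rw [OTcost]
      refine le_trans (iInf₂_le (π.map fun q => (q.2, Tmid q)) ⟨?ma, ?mb⟩) ?mc
      case ma => rw [Measure.map_map measurable_fst hgm]; exact hπ2
      case mb => rw [Measure.map_map measurable_snd hgm]; rfl
      case mc => rw [lintegral_map hcM hgm]
    have hae1 : ∀ᵐ q : (ℝ × ℝ) × (ℝ × ℝ) ∂π, q.1.2 ≠ 0 := by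
      rw [ae_iff]; simp only [ne_eq, not_not]
      have : {q : (ℝ × ℝ) × (ℝ × ℝ) | q.1.2 = 0} = Prod.fst ⁻¹' {x : ℝ × ℝ | x.2 = 0} := rfl
      rw [this, ← Measure.map_apply measurable_fst hset0, hπ1, hμp]
    have hae2 : ∀ᵐ q : (ℝ × ℝ) × (ℝ × ℝ) ∂π, q.2.2 ≠ 0 := by
      rw [ae_iff]; simp only [ne_eq, not_not]
      have : {q : (ℝ × ℝ) × (ℝ × ℝ) | q.2.2 = 0} = Prod.snd ⁻¹' {x : ℝ × ℝ | x.2 = 0} := rfl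
      rw [this, ← Measure.map_apply measurable_snd hset0, hπ2, hμm]
    have haeq : ∀ᵐ q ∂π, ENNReal.ofReal (c q.1 (Tmid q)) + ENNReal.ofReal (c q.2 (Tmid q))
        = ENNReal.ofReal (C q.1 q.2) := by
      filter_upwards [hae1, hae2] with q hq1 hq2
      rw [← ENNReal.ofReal_add (hc0 _ _) (hc0 _ _)]
      congr 1
      rw [hc, hc, hC]
      exact aux_eq q.1.1 q.1.2 q.2.1 q.2.2 hq1 hq2
    calc OTcost c μp νstar + OTcost c μm νstar
        ≤ OTcost c μp ν + OTcost c μm ν := hmin ν inferInstance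
      _ ≤ (∫⁻ q, ENNReal.ofReal (c q.1 (Tmid q)) ∂π)
          + ∫⁻ q, ENNReal.ofReal (c q.2 (Tmid q)) ∂π := add_le_add h1 h2
      _ = ∫⁻ q, (ENNReal.ofReal (c q.1 (Tmid q)) + ENNReal.ofReal (c q.2 (Tmid q))) ∂π :=
          (lintegral_add_left (hcM.comp hgp) _).symm
      _ = ∫⁻ q, ENNReal.ofReal (C q.1 q.2) ∂π := lintegral_congr_ae haeq
  · -- OTcost C μp μm ≤ sum : direction 1, gluing
    have hgp : Measurable fun x : ℝ × ℝ => (fp x, x) := hfp.prodMk measurable_id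
    have hgm : Measurable fun x : ℝ × ℝ => (fm x, x) := hfm.prodMk measurable_id
    set ρp : Measure (ℝ × (ℝ × ℝ)) := μp.map fun x => (fp x, x) with hρp
    set ρm : Measure (ℝ × (ℝ × ℝ)) := μm.map fun x => (fm x, x) with hρm
    haveI : IsProbabilityMeasure ρp := Measure.isProbabilityMeasure_map hgp.aemeasurable
    haveI : IsProbabilityMeasure ρm := Measure.isProbabilityMeasure_map hgm.aemeasurable
    have hρpfst : ρp.fst = νstar := by
      rw [hρp, Measure.fst, Measure.map_map measurable_fst hgp]
      exact hfpmap
    have hρmfst : ρm.fst = νstar := by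
      rw [hρm, Measure.fst, Measure.map_map measurable_fst hgm]
      exact hfmmap
    have hρpsnd : ρp.map Prod.snd = μp := by
      rw [hρp, Measure.map_map measurable_snd hgp]
      exact Measure.map_id
    have hρmsnd : ρm.map Prod.snd = μm := by
      rw [hρm, Measure.map_map measurable_snd hgm]
      exact Measure.map_id
    set κp := ρp.condKernel with hκp
    set κm := ρm.condKernel with hκm
    set σ : Measure (ℝ × ((ℝ × ℝ) × (ℝ × ℝ))) :=
      νstar ⊗ₘ (κp ×ₖ κm) with hσ
    have hmp : Measurable fun q : ℝ × ((ℝ × ℝ) × (ℝ × ℝ)) => (q.1, q.2.1) :=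
      measurable_fst.prodMk (measurable_fst.comp measurable_snd)
    have hmm : Measurable fun q : ℝ × ((ℝ × ℝ) × (ℝ × ℝ)) => (q.1, q.2.2) :=
      measurable_fst.prodMk (measurable_snd.comp measurable_snd)
    have projp : σ.map (fun q => (q.1, q.2.1)) = ρp := by
      ext s hs
      rw [Measure.map_apply hmp hs, hσ, Measure.compProd_apply (hmp hs)]
      conv_rhs => rw [← ρp.disintegrate ρp.condKernel]
      rw [hρpfst, Measure.compProd_apply hs]
      refine lintegral_congr fun y => ?_
      have hpre : Prod.mk y ⁻¹' ((fun q : ℝ × ((ℝ × ℝ) × (ℝ × ℝ)) => (q.1, q.2.1)) ⁻¹' s)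
          = (Prod.mk y ⁻¹' s) ×ˢ Set.univ := by
        ext x; simp [Set.mem_prod]
      rw [hpre, ProbabilityTheory.Kernel.prod_apply, Measure.prod_prod, measure_univ, mul_one]
    have projm : σ.map (fun q => (q.1, q.2.2)) = ρm := by
      ext s hs
      rw [Measure.map_apply hmm hs, hσ, Measure.compProd_apply (hmm hs)]
      conv_rhs => rw [← ρm.disintegrate ρm.condKernel]
      rw [hρmfst, Measure.compProd_apply hs]
      refine lintegral_congr fun y => ?_
      have hpre : Prod.mk y ⁻¹' ((fun q : ℝ × ((ℝ × ℝ) × (ℝ × ℝ)) => (q.1, q.2.2)) ⁻¹' s)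
          = Set.univ ×ˢ (Prod.mk y ⁻¹' s) := by
        ext x; simp [Set.mem_prod]
      rw [hpre, ProbabilityTheory.Kernel.prod_apply, Measure.prod_prod, measure_univ, one_mul]
    set π₁ : Measure ((ℝ × ℝ) × (ℝ × ℝ)) := σ.map Prod.snd with hπ₁
    have m1 : π₁.map Prod.fst = μp := by
      rw [hπ₁, Measure.map_map measurable_fst measurable_snd, ← hρpsnd, ← projp,
        Measure.map_map measurable_snd hmp]
      rfl
    have m2 : π₁.map Prod.snd = μm := by
      rw [hπ₁, Measure.map_map measurable_snd measurable_snd, ← hρmsnd, ← projm,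
        Measure.map_map measurable_snd hmm]
      rfl
    have hσp0 : σ {q : ℝ × ((ℝ × ℝ) × (ℝ × ℝ)) | q.2.1.2 = 0} = 0 := by
      have h1 : {q : ℝ × ((ℝ × ℝ) × (ℝ × ℝ)) | q.2.1.2 = 0}
          = (fun q : ℝ × ((ℝ × ℝ) × (ℝ × ℝ)) => (q.1, q.2.1)) ⁻¹'
            (Prod.snd ⁻¹' {x : ℝ × ℝ | x.2 = 0}) := rfl
      rw [h1, ← Measure.map_apply hmp (measurable_snd hset0), projp,
        ← Measure.map_apply measurable_snd hset0, hρpsnd, hμp]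
    have hσm0 : σ {q : ℝ × ((ℝ × ℝ) × (ℝ × ℝ)) | q.2.2.2 = 0} = 0 := by
      have h1 : {q : ℝ × ((ℝ × ℝ) × (ℝ × ℝ)) | q.2.2.2 = 0}
          = (fun q : ℝ × ((ℝ × ℝ) × (ℝ × ℝ)) => (q.1, q.2.2)) ⁻¹'
            (Prod.snd ⁻¹' {x : ℝ × ℝ | x.2 = 0}) := rfl
      rw [h1, ← Measure.map_apply hmm (measurable_snd hset0), projm,
        ← Measure.map_apply measurable_snd hset0, hρmsnd, hμm]
    have haep : ∀ᵐ q : ℝ × ((ℝ × ℝ) × (ℝ × ℝ)) ∂σ, q.2.1.2 ≠ 0 := by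
      rw [ae_iff]; simp only [ne_eq, not_not]; exact hσp0
    have haem : ∀ᵐ q : ℝ × ((ℝ × ℝ) × (ℝ × ℝ)) ∂σ, q.2.2.2 ≠ 0 := by
      rw [ae_iff]; simp only [ne_eq, not_not]; exact hσm0
    have hptwise : ∀ᵐ q ∂σ, ENNReal.ofReal (C q.2.1 q.2.2)
        ≤ ENNReal.ofReal (c q.2.1 q.1) + ENNReal.ofReal (c q.2.2 q.1) := by
      filter_upwards [haep, haem] with q hq1 hq2
      rw [← ENNReal.ofReal_add (hc0 _ _) (hc0 _ _)]
      refine ENNReal.ofReal_le_ofReal ?_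
      rw [hC, hc, hc]
      exact aux_le q.2.1.1 q.2.1.2 q.2.2.1 q.2.2.2 q.1 hq1 hq2
    have hcost : ∫⁻ p, ENNReal.ofReal (C p.1 p.2) ∂π₁
        ≤ OTcost c μp νstar + OTcost c μm νstar := by
      rw [hπ₁, lintegral_map hCM measurable_snd]
      calc ∫⁻ q, ENNReal.ofReal (C q.2.1 q.2.2) ∂σ
          ≤ ∫⁻ q, (ENNReal.ofReal (c q.2.1 q.1) + ENNReal.ofReal (c q.2.2 q.1)) ∂σ :=
            lintegral_mono_ae hptwise
        _ = (∫⁻ q, ENNReal.ofReal (c q.2.1 q.1) ∂σ)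
            + ∫⁻ q, ENNReal.ofReal (c q.2.2 q.1) ∂σ :=
            lintegral_add_left (hcM'.comp hmp) _
        _ = (∫⁻ p, ENNReal.ofReal (c p.2 p.1) ∂ρp)
            + ∫⁻ p, ENNReal.ofReal (c p.2 p.1) ∂ρm := by
            rw [← projp, ← projm, lintegral_map hcM' hmp, lintegral_map hcM' hmm]
        _ = (∫⁻ x, ENNReal.ofReal (c x (fp x)) ∂μp)
            + ∫⁻ x, ENNReal.ofReal (c x (fm x)) ∂μm := by
            rw [hρp, hρm, lintegral_map hcM' hgp, lintegral_map hcM' hgm]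
        _ = OTcost c μp νstar + OTcost c μm νstar := by rw [hfpopt, hfmopt]
    rw [OTcost]
    exact le_trans (iInf₂_le π₁ ⟨m1, m2⟩) hcost
end

section
/- Suppose x satisfies: for all t ∈ (f*(x), y], η(x) − t < κ(t)Δ(x) with Δ(x) > 0, where y ≥ f*(x). Then, with c(x,u) = (η(x)−u)²/Δ(x) and v(u) = −2∫₀^u κ(t)dt, one has c(x,y) − c(x,f*(x)) ≥ v(y) − v(f*(x)). Symmetrically, if for all t ∈ [y, f*(x)), η(x) − t ≥ κ(t)Δ(x), the same inequality holds for y < f*(x). -/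
open MeasureTheory intervalIntegral

/-- With `c(x,u) = (η(x)−u)²/Δ(x)`, `Δ(x) > 0`, and `v(u) = −2∫₀^u κ(t)dt`: if for all
`t ∈ (f*(x), y]` one has `η(x) − t < κ(t)Δ(x)` (with `y ≥ f*(x)`), then
`c(x,y) − c(x,f*(x)) ≥ v(y) − v(f*(x))`; symmetrically, if `y < f*(x)` and
`η(x) − t ≥ κ(t)Δ(x)` for all `t ∈ [y, f*(x))`, the same inequality holds. -/
theorem stmt18 (ηx Δx fx : ℝ) (hΔx : 0 < Δx) (κ : ℝ → ℝ)
    (hκint : ∀ a b : ℝ, IntervalIntegrable κ MeasureTheory.volume a b)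
    (c : ℝ → ℝ) (hc : ∀ u, c u = (ηx - u) ^ 2 / Δx)
    (v : ℝ → ℝ) (hv : ∀ u, v u = -2 * ∫ t in (0 : ℝ)..u, κ t) (y : ℝ) :
    (fx ≤ y → (∀ t ∈ Set.Ioc fx y, ηx - t < κ t * Δx) →
      v y - v fx ≤ c y - c fx) ∧
    (y < fx → (∀ t ∈ Set.Ico y fx, κ t * Δx ≤ ηx - t) →
      v y - v fx ≤ c y - c fx) := by
  have hg : ∀ a b : ℝ, IntervalIntegrable (fun t => 2 * (t - ηx) / Δx) volume a b :=
    fun a b => (Continuous.intervalIntegrable (by continuity) a b)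
  have hv' : v y - v fx = -2 * ∫ t in fx..y, κ t := by
    rw [hv, hv, ← mul_sub,
      intervalIntegral.integral_interval_sub_left (hκint 0 y) (hκint 0 fx)]
  have hc' : c y - c fx = ∫ t in fx..y, 2 * (t - ηx) / Δx := by
    rw [hc, hc]
    have h1 : ∫ t in fx..y, 2 * (t - ηx) / Δx
        = (∫ t in fx..y, 2 * (t - ηx)) / Δx := intervalIntegral.integral_div _ _
    have h2 : ∫ t in fx..y, 2 * (t - ηx) = (y - ηx) ^ 2 - (fx - ηx) ^ 2 := by
      have : ∫ t in fx..y, 2 * (t - ηx)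
          = 2 * ((∫ t in fx..y, t) - ∫ t in fx..y, ηx) := by
        rw [← intervalIntegral.integral_sub intervalIntegrable_id
          (intervalIntegrable_const), intervalIntegral.integral_const_mul]
      rw [this, integral_id, intervalIntegral.integral_const, smul_eq_mul]
      ring
    rw [h1, h2]
    ring
  rw [hv', hc']
  constructor
  · intro hle h
    rw [← sub_nonneg, ← intervalIntegral.integral_const_mul,
      ← intervalIntegral.integral_sub (hg fx y) ((hκint fx y).const_mul _)]
    apply intervalIntegral.integral_nonneg_of_ae_restrict hle
    rw [← MeasureTheory.Measure.restrict_congr_set MeasureTheory.Ioc_ae_eq_Icc]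
    filter_upwards [MeasureTheory.ae_restrict_mem measurableSet_Ioc] with t ht
    have := h t ht
    have h3 : -(κ t) < (t - ηx) / Δx := by
      rw [lt_div_iff₀ hΔx]; linarith
    have : 0 ≤ 2 * ((t - ηx) / Δx + κ t) := by linarith
    calc (0:ℝ) ≤ 2 * ((t - ηx) / Δx + κ t) := this
      _ = 2 * (t - ηx) / Δx - -2 * κ t := by ring
  · intro hlt h
    rw [← sub_nonneg, ← intervalIntegral.integral_const_mul,
      ← intervalIntegral.integral_sub (hg fx y) ((hκint fx y).const_mul _),
      intervalIntegral.integral_symm y fx, ← intervalIntegral.integral_neg]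
    apply intervalIntegral.integral_nonneg_of_ae_restrict hlt.le
    rw [← MeasureTheory.Measure.restrict_congr_set MeasureTheory.Ico_ae_eq_Icc]
    filter_upwards [MeasureTheory.ae_restrict_mem measurableSet_Ico] with t ht
    have := h t ht
    have h3 : κ t ≤ (ηx - t) / Δx := by
      rw [le_div_iff₀ hΔx]; linarith
    have : 0 ≤ 2 * ((ηx - t) / Δx - κ t) := by linarith
    calc (0:ℝ) ≤ 2 * ((ηx - t) / Δx - κ t) := this
      _ = -(2 * (t - ηx) / Δx - -2 * κ t) := by ring
end
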